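/- Let p be a prime, let A be a θ^p-ring, let e ≥ 1, and let a ∈ A satisfy p^e·a = 0. Then for every k with 0 ≤ k ≤ e−1 one has a^{p^e+p^{e−1}} = ψ^{p^k}(a^{p^{e−k}+p^{e−k−1}}). -/

import Mathlib

/-- A `θ^p`-ring: a commutative ring `A` equipped with maps `θ ψ : A → A` such that
`ψ` is a ring homomorphism, `ψ a = a^p - p * θ a`, and `θ` satisfies the usual
identities of a `p`-typical `δ`-structure. -/
structure IsThetaRing (p : ℕ) {A : Type*} [CommRing A] (θ ψ : A → A) : Prop where
  psi_one : ψ 1 = 1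
  psi_add : ∀ a b : A, ψ (a + b) = ψ a + ψ b
  psi_mul : ∀ a b : A, ψ (a * b) = ψ a * ψ b
  psi_def : ∀ a : A, ψ a = a ^ p - (p : A) * θ a
  theta_one : θ 1 = 0
  theta_add : ∀ a b : A, θ (a + b) = θ a + θ b +
    ∑ j ∈ Finset.Ioo 0 p, ((p.choose j / p : ℕ) : A) * a ^ j * b ^ (p - j)
  theta_mul : ∀ a b : A, θ (a * b) = θ a * ψ b + a ^ p * θ b
  theta_psi : ∀ a : A, θ (ψ a) = ψ (θ a)


/-!
For `p x = 0` one has `ψ x = 0`: since `θ p = p^(p-1) - 1`, expanding `θ (p x) = θ 0 = 0` gives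
`ψ x = p^(p-1) x^p = 0`. Hence `ψ` lowers the `p`-power torsion exponent by one, and `ψ^[k] a` is
killed by `p^(e-k)`. If `p^(f+2) b = 0`, then `ψ b ≡ b^p mod p`, so `(ψ b)^(p^i) ≡ b^(p^(i+1))`
modulo `p^(i+1)`; together with `p^(f+1) ψ b = 0` and `p^(f+1) b^(p+1) = 0` this yields
`ψ (b^(p^(f+1) + p^f)) = b^(p^(f+2) + p^(f+1))`, and the theorem follows by induction on `k`.
-/

theorem Nat.succ_pow_prime_sub_succ {p : ℕ} (hp : p.Prime) (n : ℕ) :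
    (n + 1) ^ p - (n + 1) = n ^ p - n + p * ∑ j ∈ Finset.Ioo 0 p, n ^ j * (p.choose j / p) := by
  have hexp := add_pow_prime_eq' hp n 1
  simp only [one_pow, mul_one, Nat.cast_id] at hexp
  have hle : n ≤ n ^ p := Nat.le_self_pow hp.ne_zero n
  omega

namespace IsThetaRing

variable {p : ℕ} {A : Type*} [CommRing A] {θ ψ : A → A}

def psiHom (h : IsThetaRing p θ ψ) : A →+* A where
  toFun := ψ
  map_one' := h.psi_one
  map_mul' := h.psi_mul
  map_zero' := by simpa using h.psi_add 0 0
  map_add' := h.psi_add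

@[simp]
theorem coe_psiHom (h : IsThetaRing p θ ψ) : ⇑h.psiHom = ψ := rfl

theorem theta_zero (h : IsThetaRing p θ ψ) : θ 0 = 0 := by
  have hsum : ∑ j ∈ Finset.Ioo 0 p, ((p.choose j / p : ℕ) : A) * 0 ^ j * 0 ^ (p - j) = 0 :=
    Finset.sum_eq_zero fun j hj => by
      rw [zero_pow (Finset.mem_Ioo.1 hj).1.ne', mul_zero, zero_mul]
  simpa [hsum] using h.theta_add 0 0

theorem theta_natCast (h : IsThetaRing p θ ψ) (hp : p.Prime) (n : ℕ) :
    θ n = ((n ^ p - n) / p : ℕ) := by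
  induction n with
  | zero => simpa [zero_pow hp.ne_zero] using h.theta_zero
  | succ n ih =>
    rw [Nat.succ_pow_prime_sub_succ hp, Nat.add_mul_div_left _ _ hp.pos]
    push_cast
    rw [h.theta_add, h.theta_one, ih]
    simp only [one_pow, mul_one, add_zero, mul_comm]

theorem theta_prime (h : IsThetaRing p θ ψ) (hp : p.Prime) : θ p = (p : A) ^ (p - 1) - 1 := by
  have hpow : p ^ p - p = p * (p ^ (p - 1) - 1) := by
    rw [Nat.mul_sub_one, ← pow_succ', Nat.sub_add_cancel hp.one_le]
  rw [h.theta_natCast hp, hpow, Nat.mul_div_cancel_left _ hp.pos,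
    Nat.cast_sub (Nat.one_le_pow _ _ hp.pos)]
  push_cast
  rfl

theorem psi_eq_zero_of_prime_mul_eq_zero (h : IsThetaRing p θ ψ) (hp : p.Prime) {x : A}
    (hx : (p : A) * x = 0) : ψ x = 0 := by
  obtain ⟨q, rfl⟩ : ∃ q, p = q + 2 := ⟨p - 2, by have := hp.two_le; omega⟩
  have hθ : θ ((q + 2 : ℕ) * x) = 0 := by rw [hx, h.theta_zero]
  rw [h.theta_mul, h.theta_prime hp, show q + 2 - 1 = q + 1 from rfl] at hθ
  linear_combination -hθ + ((q + 2 : ℕ) : A) ^ (q + 1) * h.psi_def x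
    + ((q + 2 : ℕ) : A) ^ q * x ^ (q + 1) * hx

theorem pow_mul_psi_eq_zero (h : IsThetaRing p θ ψ) (hp : p.Prime) {n : ℕ} {x : A}
    (hx : (p : A) ^ (n + 1) * x = 0) : (p : A) ^ n * ψ x = 0 := by
  have hψ : h.psiHom ((p : A) ^ n * x) = 0 :=
    h.psi_eq_zero_of_prime_mul_eq_zero hp (by rwa [← mul_assoc, ← pow_succ'])
  rwa [map_mul, map_pow, map_natCast, coe_psiHom] at hψ

theorem pow_mul_iterate_psi_eq_zero (h : IsThetaRing p θ ψ) (hp : p.Prime) {n k : ℕ} {x : A}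
    (hx : (p : A) ^ (n + k) * x = 0) : (p : A) ^ n * ψ^[k] x = 0 := by
  induction k generalizing n with
  | zero => simpa using hx
  | succ k ih =>
    rw [Function.iterate_succ_apply']
    exact h.pow_mul_psi_eq_zero hp (ih (by rwa [Nat.add_right_comm]))

theorem psi_pow_eq_pow (h : IsThetaRing p θ ψ) (hp : p.Prime) {f : ℕ} {b : A}
    (hb : (p : A) ^ (f + 2) * b = 0) :
    ψ (b ^ (p ^ (f + 1) + p ^ f)) = b ^ (p ^ (f + 2) + p ^ (f + 1)) := by
  have hψb : (p : A) ^ (f + 1) * ψ b = 0 := h.pow_mul_psi_eq_zero hp hb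
  have hbp : (p : A) ^ (f + 1) * b ^ (p + 1) = 0 := by
    linear_combination b * hψb + θ b * hb - (p : A) ^ (f + 1) * b * h.psi_def b
  have hdvd : (p : A) ∣ ψ b - b ^ p := ⟨-θ b, by rw [h.psi_def]; ring⟩
  obtain ⟨r, hr⟩ := dvd_sub_pow_of_dvd_sub hdvd f
  obtain ⟨s, hs⟩ := dvd_sub_pow_of_dvd_sub hdvd (f + 1)
  obtain ⟨t, ht⟩ := dvd_pow_self (ψ b) (pow_ne_zero f hp.ne_zero)
  obtain ⟨w, hw⟩ : b ^ (p + 1) ∣ (b ^ p) ^ p ^ (f + 1) := by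
    rw [← pow_mul]
    have : p ≤ p ^ (f + 1) := Nat.le_self_pow (Nat.succ_ne_zero f) p
    exact pow_dvd_pow b (by nlinarith [hp.two_le])
  have hψ : ψ (b ^ (p ^ (f + 1) + p ^ f)) = ψ b ^ p ^ (f + 1) * ψ b ^ p ^ f := by
    rw [← pow_add]; exact map_pow h.psiHom b _
  -- With `c = ψ b`, `d = b ^ p`, `P = p^(f+1)`, `u = p^f`: `c^P c^u - d^P d^u` equals
  -- `c^u (c^P - d^P) + d^P (c^u - d^u)`, killed by `p^(f+1) ψ b = 0` and `p^(f+1) b^(p+1) = 0`.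
  rw [hψ, show b ^ (p ^ (f + 2) + p ^ (f + 1)) = (b ^ p) ^ p ^ (f + 1) * (b ^ p) ^ p ^ f by ring]
  linear_combination ψ b ^ p ^ f * hs + (b ^ p) ^ p ^ (f + 1) * hr + (p : A) * s * t * hψb
    + (p : A) ^ (f + 2) * s * ht + (p : A) ^ (f + 1) * r * hw + w * r * hbp

theorem iterate_succ_psi_pow (h : IsThetaRing p θ ψ) (hp : p.Prime) {f k : ℕ} {a : A}
    (ha : (p : A) ^ (f + k + 2) * a = 0) :
    ψ^[k + 1] (a ^ (p ^ (f + 1) + p ^ f)) = ψ^[k] (a ^ (p ^ (f + 2) + p ^ (f + 1))) := by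
  have hk : (p : A) ^ (f + 2) * ψ^[k] a = 0 :=
    h.pow_mul_iterate_psi_eq_zero hp (by rwa [Nat.add_right_comm])
  calc ψ^[k + 1] (a ^ (p ^ (f + 1) + p ^ f))
      = ψ ((ψ^[k] a) ^ (p ^ (f + 1) + p ^ f)) := by
        rw [Function.iterate_succ_apply']; exact congrArg ψ (iterate_map_pow h.psiHom k a _)
    _ = (ψ^[k] a) ^ (p ^ (f + 2) + p ^ (f + 1)) := h.psi_pow_eq_pow hp hk
    _ = ψ^[k] (a ^ (p ^ (f + 2) + p ^ (f + 1))) := (iterate_map_pow h.psiHom k a _).symm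

theorem pow_eq_iterate_psi_pow (h : IsThetaRing p θ ψ) (hp : p.Prime) {a : A} {f k : ℕ}
    (ha : (p : A) ^ (f + k + 1) * a = 0) :
    a ^ (p ^ (f + k + 1) + p ^ (f + k)) = ψ^[k] (a ^ (p ^ (f + 1) + p ^ f)) := by
  induction k generalizing f with
  | zero => rfl
  | succ k ih =>
    rw [h.iterate_succ_psi_pow hp (by rwa [← add_assoc] at ha)]
    convert ih (f := f + 1) (by rwa [Nat.add_right_comm, ← add_assoc] at ha) using 3 <;> ring

end IsThetaRing

theorem pow_eq_psi_iterate_pow (p : ℕ) (hp : p.Prime) (A : Type*) [CommRing A]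
    (θ ψ : A → A) (h : IsThetaRing p θ ψ) (e : ℕ) (he : 1 ≤ e) (a : A)
    (ha : (p : A) ^ e * a = 0) :
    ∀ k : ℕ, k ≤ e - 1 →
      a ^ (p ^ e + p ^ (e - 1)) = ψ^[k] (a ^ (p ^ (e - k) + p ^ (e - k - 1))) := by
  intro k hk
  obtain ⟨f, rfl⟩ : ∃ f, e = f + k + 1 := ⟨e - 1 - k, by omega⟩
  rw [Nat.add_sub_cancel, show f + k + 1 - k = f + 1 by omega, Nat.add_sub_cancel]
  exact h.pow_eq_iterate_psi_pow hp ha
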